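/- Let q be a pure unit quaternion, L = spanℝ{1, q}, and a, b unit quaternions with M := a·L = L·b. The pairs (a, aq) and (b, qb) are both orthonormal bases of M; if the 2×2 change-of-basis matrix from (a, aq) to (b, qb) has positive determinant (i.e. they induce the same orientation of M), then M = L and a·q = q·a. -/

import Mathlib

/-!
Write `b = a z₁` and `q b = a z₂` with `z₁, z₂ ∈ L`, read off from the columns of the
change-of-basis matrix. The conjugate `w = a⁻¹ q a` is again a pure unit quaternion and
`w z₁ = z₂`, so `|z₁|² w = z₂ z̄₁ = r + det · q` with `r` real. Comparing real parts gives
`r = 0`, and comparing norms gives `|z₁|² = |det|`; when `det > 0` this forces `w = q`, i.e.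
`a q = q a`. For a pure `q` with `q² = -1` the centraliser of `q` is `L = ℝ[q]`, a subalgebra
closed under conjugation, so `a ∈ L` and `a L = L`.
-/

open Quaternion

namespace Quaternion

variable {a q : ℍ[ℝ]}

lemma mul_self_eq_neg_one_of_re_eq_zero (hre : q.re = 0) (hq : ‖q‖ = 1) : q * q = -1 := by
  rw [← sq, sq_eq_neg_normSq.mpr hre, normSq_eq_norm_mul_self, hq, mul_one, coe_one]

lemma self_mul_star_of_norm_eq_one (ha : ‖a‖ = 1) : a * star a = 1 := by
  rw [self_mul_star, normSq_eq_norm_mul_self, ha, mul_one, coe_one]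

lemma star_mul_self_of_norm_eq_one (ha : ‖a‖ = 1) : star a * a = 1 := by
  rw [star_mul_self, normSq_eq_norm_mul_self, ha, mul_one, coe_one]

lemma re_mul_comm (x y : ℍ[ℝ]) : (x * y).re = (y * x).re := by
  simp only [re_mul]; ring

lemma orthonormal_one_of_re_eq_zero (hre : q.re = 0) (hq : ‖q‖ = 1) :
    Orthonormal ℝ ![1, q] := by
  simp [inner_def, hre, hq]

def mulLeftIsometry (a : ℍ[ℝ]) (ha : ‖a‖ = 1) : ℍ[ℝ] →ₗᵢ[ℝ] ℍ[ℝ] where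
  toLinearMap := LinearMap.mulLeft ℝ a
  norm_map' x := by simp [norm_mul, ha]

def mulRightIsometry (a : ℍ[ℝ]) (ha : ‖a‖ = 1) : ℍ[ℝ] →ₗᵢ[ℝ] ℍ[ℝ] where
  toLinearMap := LinearMap.mulRight ℝ a
  norm_map' x := by simp [norm_mul, ha]

lemma orthonormal_mul_left (hre : q.re = 0) (hq : ‖q‖ = 1) (ha : ‖a‖ = 1) :
    Orthonormal ℝ ![a, a * q] := by
  convert (orthonormal_one_of_re_eq_zero hre hq).comp_linearIsometry (mulLeftIsometry a ha)
  funext i; fin_cases i <;> simp [mulLeftIsometry]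

lemma orthonormal_mul_right (hre : q.re = 0) (hq : ‖q‖ = 1) (ha : ‖a‖ = 1) :
    Orthonormal ℝ ![a, q * a] := by
  convert (orthonormal_one_of_re_eq_zero hre hq).comp_linearIsometry (mulRightIsometry a ha)
  funext i; fin_cases i <;> simp [mulRightIsometry]

lemma mul_add_mul_of_re_eq_zero (hre : q.re = 0) (x : ℍ[ℝ]) :
    x * q + q * x = (2 : ℝ) • (x.re • q + ((x * q).re : ℍ[ℝ])) := by
  ext <;> simp [hre] <;> ring

lemma mem_span_pair_of_commute (hre : q.re = 0) (hqq : q * q = -1) {x : ℍ[ℝ]}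
    (h : x * q = q * x) : x ∈ Submodule.span ℝ {1, q} := by
  have hxq : x * q = x.re • q + ((x * q).re : ℍ[ℝ]) := by
    have := mul_add_mul_of_re_eq_zero hre x
    rw [← h, ← two_smul ℝ] at this
    exact smul_right_injective _ two_ne_zero this
  rw [Submodule.mem_span_pair]
  refine ⟨x.re, -(x * q).re, ?_⟩
  calc x.re • 1 + -(x * q).re • q = -((x.re • q + ((x * q).re : ℍ[ℝ])) * q) := by
        rw [add_mul, smul_mul_assoc, hqq, coe_mul_eq_smul]; module
    _ = x := by rw [← hxq, mul_assoc, hqq, mul_neg_one, neg_neg]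

lemma mul_mem_span_pair (hqq : q * q = -1) {x y : ℍ[ℝ]}
    (hx : x ∈ Submodule.span ℝ {1, q}) (hy : y ∈ Submodule.span ℝ {1, q}) :
    x * y ∈ Submodule.span ℝ {1, q} := by
  rw [Submodule.mem_span_pair] at hx hy ⊢
  obtain ⟨α, β, rfl⟩ := hx
  obtain ⟨γ, δ, rfl⟩ := hy
  refine ⟨α * γ - β * δ, α * δ + β * γ, ?_⟩
  simp only [add_mul, mul_add, smul_mul_assoc, mul_smul_comm, one_mul, mul_one, hqq]
  module

lemma star_mem_span_pair (hre : q.re = 0) {x : ℍ[ℝ]} (hx : x ∈ Submodule.span ℝ {1, q}) :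
    star x ∈ Submodule.span ℝ {1, q} := by
  rw [Submodule.mem_span_pair] at hx ⊢
  obtain ⟨α, β, rfl⟩ := hx
  exact ⟨α, -β, by simp [star_eq_neg.mpr hre]⟩

lemma map_mulLeft_span_pair (hre : q.re = 0) (hqq : q * q = -1) (ha : ‖a‖ = 1)
    (haL : a ∈ Submodule.span ℝ {1, q}) :
    (Submodule.span ℝ {1, q}).map (LinearMap.mulLeft ℝ a) = Submodule.span ℝ {1, q} := by
  refine le_antisymm ?_ fun x hx ↦ ⟨star a * x, ?_, ?_⟩
  · rintro _ ⟨y, hy, rfl⟩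
    exact mul_mem_span_pair hqq haL hy
  · exact mul_mem_span_pair hqq (star_mem_span_pair hre haL) hx
  · simp [← mul_assoc, self_mul_star_of_norm_eq_one ha]

lemma mul_star_eq_add_det_smul (hre : q.re = 0) (hqq : q * q = -1) (c₁₁ c₁₂ c₂₁ c₂₂ : ℝ) :
    (c₁₂ • 1 + c₂₂ • q) * star (c₁₁ • 1 + c₂₁ • q) =
      (c₁₂ * c₁₁ + c₂₂ * c₂₁) • 1 + (c₁₁ * c₂₂ - c₁₂ * c₂₁) • q := by
  simp only [star_add, star_smul, star_one, star_eq_neg.mpr hre, add_mul, mul_add,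
    smul_mul_assoc, mul_smul_comm, one_mul, mul_one, mul_neg, hqq]
  module

lemma eq_of_smul_eq_smul_one_add_smul {w : ℍ[ℝ]} {t r d : ℝ} (hw : w.re = 0) (hre : q.re = 0)
    (hnorm : ‖w‖ = ‖q‖) (ht : 0 < t) (hd : 0 < d) (h : t • w = r • 1 + d • q) : w = q := by
  have hr : 0 = r := by simpa [hw, hre] using congrArg QuaternionAlgebra.re h
  rw [← hr, zero_smul, zero_add] at h
  have htd : t * ‖q‖ = d * ‖q‖ := by
    simpa [norm_smul, hnorm, abs_of_pos ht, abs_of_pos hd] using congrArg norm h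
  rcases eq_or_ne q 0 with rfl | hq0
  · simpa using hnorm
  · rw [mul_left_inj' (norm_ne_zero_iff.mpr hq0)] at htd
    rw [htd] at h
    exact smul_right_injective _ hd.ne' h

lemma re_star_mul_mul (ha : ‖a‖ = 1) (x : ℍ[ℝ]) : (star a * x * a).re = x.re := by
  rw [re_mul_comm, ← mul_assoc, self_mul_star_of_norm_eq_one ha, one_mul]

lemma mul_comm_of_det_pos (hre : q.re = 0) (hq : ‖q‖ = 1) (ha : ‖a‖ = 1) {b : ℍ[ℝ]}
    (hb : b ≠ 0) {c₁₁ c₁₂ c₂₁ c₂₂ : ℝ} (h₁ : b = c₁₁ • a + c₂₁ • (a * q))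
    (h₂ : q * b = c₁₂ • a + c₂₂ • (a * q)) (hdet : 0 < c₁₁ * c₂₂ - c₁₂ * c₂₁) : a * q = q * a := by
  have hqq := mul_self_eq_neg_one_of_re_eq_zero hre hq
  set z₁ : ℍ[ℝ] := c₁₁ • 1 + c₂₁ • q
  set z₂ : ℍ[ℝ] := c₁₂ • 1 + c₂₂ • q
  have hb₁ : b = a * z₁ := by simp only [h₁, z₁, mul_add, mul_smul_comm, mul_one]
  have hb₂ : q * b = a * z₂ := by simp only [h₂, z₂, mul_add, mul_smul_comm, mul_one]
  set w := star a * q * a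
  have hwz : w * z₁ = z₂ := by
    rw [mul_assoc, ← hb₁, mul_assoc, hb₂, ← mul_assoc, star_mul_self_of_norm_eq_one ha, one_mul]
  have hz₁ : 0 < normSq z₁ :=
    normSq_nonneg.lt_of_ne' (normSq_ne_zero.mpr (right_ne_zero_of_mul (hb₁ ▸ hb)))
  have hw : w = q := by
    refine eq_of_smul_eq_smul_one_add_smul (r := c₁₂ * c₁₁ + c₂₂ * c₂₁)
      (re_star_mul_mul ha q ▸ hre) hre (by simp [w, norm_mul, ha]) hz₁ hdet ?_
    rw [← mul_coe_eq_smul, ← self_mul_star, ← mul_assoc, hwz,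
      mul_star_eq_add_det_smul hre hqq]
  calc a * q = a * w := by rw [hw]
    _ = q * a := by rw [← mul_assoc, ← mul_assoc, self_mul_star_of_norm_eq_one ha, one_mul]

end Quaternion

theorem same_orientation_implies_eq_general (q : Quaternion ℝ)
    (hpure : q.re = 0) (hunit : ‖q‖ = 1) (a b : Quaternion ℝ)
    (ha : ‖a‖ = 1) (hb : ‖b‖ = 1) :
    Orthonormal ℝ ![a, a * q] ∧ Orthonormal ℝ ![b, q * b] ∧
    (∀ c₁₁ c₁₂ c₂₁ c₂₂ : ℝ,
      b = c₁₁ • a + c₂₁ • (a * q) →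
      q * b = c₁₂ • a + c₂₂ • (a * q) →
      0 < c₁₁ * c₂₂ - c₁₂ * c₂₁ →
      (Submodule.span ℝ {(1 : Quaternion ℝ), q}).map (LinearMap.mulLeft ℝ a) =
          Submodule.span ℝ {(1 : Quaternion ℝ), q} ∧ a * q = q * a) := by
  refine ⟨orthonormal_mul_left hpure hunit ha, orthonormal_mul_right hpure hunit hb, ?_⟩
  intro c₁₁ c₁₂ c₂₁ c₂₂ h₁ h₂ hdet
  have hqq := mul_self_eq_neg_one_of_re_eq_zero hpure hunit
  have hb0 : b ≠ 0 := norm_ne_zero_iff.mp (hb ▸ one_ne_zero)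
  have hcomm := mul_comm_of_det_pos hpure hunit ha hb0 h₁ h₂ hdet
  exact ⟨map_mulLeft_span_pair hpure hqq ha (mem_span_pair_of_commute hpure hqq hcomm), hcomm⟩

/-- Let `q` be a pure unit quaternion, `L = spanℝ{1,q}`, `a, b` unit quaternions with
`M := a·L = L·b`. Then `(a, aq)` and `(b, qb)` are orthonormal (bases of `M`), and if the
change-of-basis matrix from `(a, aq)` to `(b, qb)` has positive determinant, then `M = L`
and `aq = qa`. -/
theorem same_orientation_implies_eq (q : Quaternion ℝ)
    (hpure : q.re = 0) (hunit : ‖q‖ = 1) (a b : Quaternion ℝ)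
    (ha : ‖a‖ = 1) (hb : ‖b‖ = 1)
    (hM : (Submodule.span ℝ {(1 : Quaternion ℝ), q}).map (LinearMap.mulLeft ℝ a) =
        (Submodule.span ℝ {(1 : Quaternion ℝ), q}).map (LinearMap.mulRight ℝ b)) :
    Orthonormal ℝ ![a, a * q] ∧ Orthonormal ℝ ![b, q * b] ∧
    (∀ c₁₁ c₁₂ c₂₁ c₂₂ : ℝ,
      b = c₁₁ • a + c₂₁ • (a * q) →
      q * b = c₁₂ • a + c₂₂ • (a * q) →
      0 < c₁₁ * c₂₂ - c₁₂ * c₂₁ →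
      (Submodule.span ℝ {(1 : Quaternion ℝ), q}).map (LinearMap.mulLeft ℝ a) =
          Submodule.span ℝ {(1 : Quaternion ℝ), q} ∧ a * q = q * a) :=
  same_orientation_implies_eq_general q hpure hunit a b ha hb
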